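/- arXiv:1311.0372 — 4 statements merged into one kernel-verified Lean document; each statement's English description precedes it below -/
import Mathlib

section
/- For A ∈ ℂ with Im A > 0, the zero ζ₋(A) = (1 − √(A+1))² lies in the open lower half-plane if and only if (Im A)² < −4·Re A, where √ denotes the principal branch of the square root. -/
open Filter

/-- Principal square root on `ℂ`. -/
noncomputable def sqrtc (z : ℂ) : ℂ := z ^ ((1 : ℂ) / 2)

/-- The root `ζ₊(A) = (1 + √(A+1))²` of `D_A(z) = (z−A)² − 4z`. -/
noncomputable def zetaP (A : ℂ) : ℂ := (1 + sqrtc (A + 1)) ^ 2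

/-- The root `ζ₋(A) = (1 − √(A+1))²` of `D_A(z) = (z−A)² − 4z`. -/
noncomputable def zetaM (A : ℂ) : ℂ := (1 - sqrtc (A + 1)) ^ 2

/-!
Write `w = √(A+1) = p + iq` with `p ≥ 0`. Then `Im A = 2pq > 0` forces `q > 0`, and
`Im (1 − w)² = −2q(1 − p)`, so `ζ₋(A)` lies in the lower half-plane iff `p < 1`. On the other side,
`Re A = p² − q² − 1` gives `−4 Re A − (Im A)² = 4(1 − p²)(1 + q²)`, which is positive iff `p < 1`.
-/

lemma sqrtc_sq (z : ℂ) : sqrtc z ^ 2 = z := by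
  rw [sqrtc, one_div]
  exact_mod_cast Complex.cpow_nat_inv_pow z two_ne_zero

lemma sqrtc_re_nonneg (z : ℂ) : 0 ≤ (sqrtc z).re := by
  rw [sqrtc, one_div, Complex.cpow_inv_two_re]
  exact Real.sqrt_nonneg _

lemma Complex.im_sq (w : ℂ) : (w ^ 2).im = 2 * w.re * w.im := by
  simp only [sq, Complex.mul_im]; ring

lemma Complex.re_sq (w : ℂ) : (w ^ 2).re = w.re ^ 2 - w.im ^ 2 := by
  simp only [sq, Complex.mul_re]

lemma im_pos_of_im_sq_pos {w : ℂ} (hre : 0 ≤ w.re) (h : 0 < (w ^ 2).im) : 0 < w.im := by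
  rw [Complex.im_sq] at h
  exact pos_of_mul_pos_right h (by positivity)

lemma im_one_sub_sq_neg_iff {w : ℂ} (him : 0 < w.im) : ((1 - w) ^ 2).im < 0 ↔ w.re < 1 := by
  have h : ((1 - w) ^ 2).im = -(2 * w.im * (1 - w.re)) := by
    rw [Complex.im_sq, Complex.sub_re, Complex.sub_im, Complex.one_re, Complex.one_im]; ring
  rw [h, neg_lt_zero, mul_pos_iff_of_pos_left (by positivity), sub_pos]

lemma re_lt_one_iff_im_sq_sq_lt {w : ℂ} (hre : 0 ≤ w.re) :
    w.re < 1 ↔ (w ^ 2).im ^ 2 < -4 * ((w ^ 2).re - 1) := by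
  have h : -4 * ((w ^ 2).re - 1) - (w ^ 2).im ^ 2 = 4 * ((1 - w.re ^ 2) * (w.im ^ 2 + 1)) := by
    rw [Complex.re_sq, Complex.im_sq]; ring
  rw [← sq_lt_one_iff₀ hre, ← sub_pos, ← mul_pos_iff_of_pos_right (by positivity : 0 < w.im ^ 2 + 1),
    ← mul_pos_iff_of_pos_left (four_pos : (0 : ℝ) < 4), ← h, sub_pos]

/-- For `Im A > 0`, `ζ₋(A)` lies in the open lower half-plane iff `(Im A)² < −4·Re A`. -/
theorem zetaM_lower_half_iff (A : ℂ) (hA : 0 < A.im) :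
    (zetaM A).im < 0 ↔ A.im ^ 2 < -4 * A.re := by
  set w := sqrtc (A + 1)
  have hw : A = w ^ 2 - 1 := by rw [sqrtc_sq]; ring
  have him : A.im = (w ^ 2).im := by simp [hw]
  have hre : A.re = (w ^ 2).re - 1 := by simp [hw]
  rw [him] at hA
  have hw_re : 0 ≤ w.re := sqrtc_re_nonneg (A + 1)
  rw [zetaM, him, hre]
  exact (im_one_sub_sq_neg_iff (im_pos_of_im_sq_pos hw_re hA)).trans
    (re_lt_one_iff_im_sq_sq_lt hw_re)
end

section
/- Let A ∈ ℂ ∖ [−1,∞). There is no x > 0 such that 1 − 4x/(x − A)² is a nonpositive real number. Equivalently, for all x > 0 and all r ∈ [0,1), one has x² − 2(A + 2r)x + A² ≠ 0. -/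
/-! If `(x - A)² = 4 s x` with `x ≥ 0` and `0 ≤ s ≤ 1`, then `A = x ± 2√(s x)` is real, and by
AM–GM `x - 2√(s x) ≥ -s ≥ -1`, so `A ∈ [-1, ∞)`. Both claims reduce to this: `1 - 4x/(x - A)² = c ≤ 0`
means `(x - A)² = 4x/(1 - c)`, and `x² - 2(A + 2r)x + A² = (x - A)² - 4 r x`. -/

open Complex

lemma neg_le_sub_two_mul_sqrt_mul {x s : ℝ} (hx : 0 ≤ x) (hs : 0 ≤ s) :
    -s ≤ x - 2 * √(s * x) := by
  rw [Real.sqrt_mul hs]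
  nlinarith [sq_nonneg (√x - √s), Real.sq_sqrt hx, Real.sq_sqrt hs]

lemma eq_sub_or_eq_add_of_sq_sub_eq {A : ℂ} {x s : ℝ} (hsx : 0 ≤ s * x)
    (h : ((x : ℂ) - A) ^ 2 = 4 * s * x) :
    A = ↑(x - 2 * √(s * x)) ∨ A = ↑(x + 2 * √(s * x)) := by
  have hsq : ((x : ℂ) - A) ^ 2 = ((2 * √(s * x) : ℝ) : ℂ) ^ 2 := by
    rw [h, ← ofReal_pow, mul_pow, Real.sq_sqrt hsx]
    push_cast
    ring
  rcases sq_eq_sq_iff_eq_or_eq_neg.mp hsq with h' | h'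
  · left
    push_cast at h' ⊢
    linear_combination -h'
  · right
    push_cast at h' ⊢
    linear_combination -h'

lemma sq_sub_ne_four_mul {A : ℂ} (hA : ¬(A.im = 0 ∧ -1 ≤ A.re)) {x s : ℝ} (hx : 0 ≤ x)
    (hs0 : 0 ≤ s) (hs1 : s ≤ 1) : ((x : ℂ) - A) ^ 2 ≠ 4 * s * x := by
  intro h
  have hlow := neg_le_sub_two_mul_sqrt_mul hx hs0
  have hroot := Real.sqrt_nonneg (s * x)
  rcases eq_sub_or_eq_add_of_sq_sub_eq (mul_nonneg hs0 hx) h with rfl | rfl <;>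
    exact hA ⟨ofReal_im _, by rw [ofReal_re]; linarith⟩

/-- For `A ∈ ℂ ∖ [−1,∞)` there is no `x > 0` with `1 − 4x/(x−A)²` a nonpositive real;
equivalently, for all `x > 0` and `r ∈ [0,1)`, `x² − 2(A+2r)x + A² ≠ 0`. -/
theorem no_nonpositive_value (A : ℂ) (hA : ¬(A.im = 0 ∧ -1 ≤ A.re)) :
    (¬ ∃ x : ℝ, 0 < x ∧ ∃ c : ℝ, c ≤ 0 ∧
        1 - 4 * (x : ℂ) / ((x : ℂ) - A) ^ 2 = (c : ℂ)) ∧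
    (∀ x : ℝ, 0 < x → ∀ r : ℝ, 0 ≤ r → r < 1 →
        (x : ℂ) ^ 2 - 2 * (A + 2 * (r : ℂ)) * (x : ℂ) + A ^ 2 ≠ 0) := by
  constructor
  · rintro ⟨x, hx, c, hc, heq⟩
    have hne : ((x : ℂ) - A) ^ 2 ≠ 0 := by
      simpa using sq_sub_ne_four_mul hA hx.le le_rfl zero_le_one
    have hc1 : (1 : ℂ) - c ≠ 0 := by
      exact_mod_cast (by linarith : (1 : ℝ) - c ≠ 0)
    refine sq_sub_ne_four_mul hA hx.le (s := 1 / (1 - c)) (by bound)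
      ((div_le_one (by linarith)).mpr (by linarith)) ?_
    have hsq : ((x : ℂ) - A) ^ 2 * (1 - c) = 4 * x := by
      rw [← heq, sub_sub_cancel, mul_div_cancel₀ _ hne]
    push_cast
    field_simp
    linear_combination hsq
  · intro x hx r hr0 hr1 heq
    exact sq_sub_ne_four_mul hA hx.le hr0 hr1.le (by linear_combination heq)
end

section
/- Let A ∈ ℂ with Im A > 0, and let f(z) = √(D_A(z))/(z − A) be the branch of √(1 − 4z/(z−A)²) on a neighborhood of [0,∞) in ℂ that is holomorphic along the positive real axis and satisfies f(x) → 1 as x → +∞ along ℝ. Then f(0) = 1; equivalently, the branch of √(D_A(z)) normalized by √(D_A(z))/z → 1 at infinity, continued along the positive real axis to 0, satisfies √(D_A(0)) = −A. -/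
/-!
For `x ≥ 0` the value `w x = 1 - 4x/(x - A)²` never lies on `(-∞, 0]`: otherwise `(x - A)²` would
be a nonnegative real, forcing `x - A` to be real. Hence the principal square root `w ^ (1/2)` is a
continuous nonvanishing branch on `[0, ∞)`. Two continuous branches of the same square root on a
connected set differ by a constant sign, which the normalization at `+∞` fixes; so `f = w ^ (1/2)`,
giving `f 0 = 1`, and `g x = (x - A) * f x`, giving `g 0 = -A`.
-/

open Filter Set Topology Complex

theorem IsPreconnected.eqOn_of_sq_eq_of_tendsto_div {α 𝕜 : Type*} [TopologicalSpace α]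
    [Field 𝕜] [NeZero (2 : 𝕜)] [TopologicalSpace 𝕜] [T2Space 𝕜] [ContinuousInv₀ 𝕜]
    [ContinuousMul 𝕜] {S : Set α} {u v : α → 𝕜} {l : Filter α} [l.NeBot]
    (hS : IsPreconnected S) (hu : ContinuousOn u S) (hv : ContinuousOn v S)
    (hsq : EqOn (u ^ 2) (v ^ 2) S) (hv0 : ∀ x ∈ S, v x ≠ 0) (hSl : S ∈ l)
    (hlim : Tendsto (fun x => u x / v x) l (𝓝 1)) : EqOn u v S := by
  refine (hS.eq_or_eq_neg_of_sq_eq hu hv hsq fun hx => hv0 _ hx).resolve_right fun hneg => ?_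
  have hlim' : Tendsto (fun x => u x / v x) l (𝓝 (-1)) :=
    tendsto_const_nhds.congr' <| mem_of_superset hSl fun x hx => by
      simp [hneg hx, neg_div, div_self (hv0 x hx)]
  have h2 : (2 : 𝕜) = 0 := by linear_combination tendsto_nhds_unique hlim hlim'
  exact two_ne_zero h2

theorem Complex.one_sub_div_sq_mem_slitPlane {z : ℂ} (hz : z.im ≠ 0) {c : ℝ} (hc : 0 ≤ c) :
    1 - c / z ^ 2 ∈ slitPlane := by
  open ComplexOrder in
  rw [mem_slitPlane_iff_not_le_zero]
  intro hle
  set u := (c : ℂ) / z ^ 2 with hu_def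
  have hu : ((1 : ℝ) : ℂ) ≤ u := by simpa using sub_nonpos.mp hle
  have hu_pos : 0 < u.re := by linarith [(le_def.mp hu).1, ofReal_re 1]
  have hu_real : u = u.re := eq_re_of_ofReal_le hu
  obtain ⟨hc0, hz0⟩ := div_ne_zero_iff.mp (ne_of_apply_ne re hu_pos.ne' : u ≠ 0)
  have hz2 : z ^ 2 = ((c / u.re : ℝ) : ℂ) := by
    rw [ofReal_div, ← hu_real, hu_def]; field_simp
  exact hz (sq_nonneg_iff.mp (hz2 ▸ zero_le_real.mpr (div_nonneg hc hu_pos.le)))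

theorem Complex.eqOn_cpow_inv_two_of_sq_eq {α : Type*} [TopologicalSpace α] {S : Set α}
    {l : Filter α} [l.NeBot] {f w : α → ℂ} (hS : IsPreconnected S) (hf : ContinuousOn f S)
    (hw : ∀ x ∈ S, w x ∈ slitPlane) (hsq : ∀ x ∈ S, f x ^ 2 = w x) (hSl : S ∈ l)
    (hlim : Tendsto f l (𝓝 1)) : EqOn f (fun x => w x ^ (2⁻¹ : ℂ)) S := by
  have hw_cont : ContinuousOn w S := (hf.pow 2).congr fun x hx => (hsq x hx).symm
  have hw_lim : Tendsto w l (𝓝 1) := by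
    simpa using (hlim.pow 2).congr' (mem_of_superset hSl hsq)
  have hsqrt_lim : Tendsto (fun x => w x ^ (2⁻¹ : ℂ)) l (𝓝 1) := by
    simpa [Function.comp_def] using
      (continuousAt_cpow_const (b := 2⁻¹) one_mem_slitPlane).tendsto.comp hw_lim
  refine hS.eqOn_of_sq_eq_of_tendsto_div hf (hw_cont.cpow_const hw) (fun x hx => ?_)
    (fun x hx => ?_) hSl (by simpa [Pi.div_def] using hlim.div hsqrt_lim one_ne_zero)
  · simp [hsq x hx]
  · simpa [cpow_eq_zero_iff] using slitPlane_ne_zero (hw x hx)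

theorem Complex.tendsto_ofReal_sub_div_atTop (a : ℂ) :
    Tendsto (fun x : ℝ => ((x : ℂ) - a) / x) atTop (𝓝 1) := by
  have hinv : Tendsto (fun x : ℝ => ((x⁻¹ : ℝ) : ℂ)) atTop (𝓝 0) := by
    simpa [Function.comp_def] using (continuous_ofReal.tendsto 0).comp tendsto_inv_atTop_zero
  refine (by simpa using tendsto_const_nhds.sub (hinv.const_mul a) :
    Tendsto (fun x : ℝ => 1 - a * ((x⁻¹ : ℝ) : ℂ)) atTop (𝓝 1)).congr' ?_
  filter_upwards [eventually_ne_atTop 0] with x hx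
  have hx' : (x : ℂ) ≠ 0 := ofReal_ne_zero.mpr hx
  push_cast
  field_simp

/-- Let `Im A > 0`. If `f` is a continuous branch of `√(1 − 4x/(x−A)²)` along `[0,∞)`
with `f(x) → 1` as `x → +∞`, then `f(0) = 1`; equivalently, if `g` is a continuous branch
of `√((x−A)² − 4x)` along `[0,∞)` with `g(x)/x → 1` as `x → +∞`, then `g(0) = −A`. -/
theorem branch_value_at_zero (A : ℂ) (hA : 0 < A.im) (f g : ℝ → ℂ)
    (hf : ContinuousOn f (Set.Ici 0))
    (hf2 : ∀ x ∈ Set.Ici (0 : ℝ), f x ^ 2 = 1 - 4 * (x : ℂ) / ((x : ℂ) - A) ^ 2)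
    (hflim : Tendsto f atTop (nhds 1))
    (hg : ContinuousOn g (Set.Ici 0))
    (hg2 : ∀ x ∈ Set.Ici (0 : ℝ), g x ^ 2 = ((x : ℂ) - A) ^ 2 - 4 * (x : ℂ))
    (hglim : Tendsto (fun x : ℝ => g x / (x : ℂ)) atTop (nhds 1)) :
    f 0 = 1 ∧ g 0 = -A := by
  have hx_sub_A : ∀ x : ℝ, ((x : ℂ) - A).im ≠ 0 := fun x => by simpa using hA.ne'
  have hd : ∀ x : ℝ, (x : ℂ) - A ≠ 0 := fun x h => hx_sub_A x (by simp [h])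
  have hslit : ∀ x ∈ Ici (0 : ℝ), 1 - 4 * (x : ℂ) / ((x : ℂ) - A) ^ 2 ∈ slitPlane := fun x hx => by
    simpa using one_sub_div_sq_mem_slitPlane (hx_sub_A x) (c := 4 * x) (by simp_all)
  have hf0 : f 0 = 1 := by
    simpa using eqOn_cpow_inv_two_of_sq_eq isPreconnected_Ici hf hslit hf2 (Ici_mem_atTop 0)
      hflim self_mem_Ici
  have hf_ne : ∀ x ∈ Ici (0 : ℝ), f x ≠ 0 := fun x hx h =>
    slitPlane_ne_zero (hslit x hx) (by rw [← hf2 x hx, h, zero_pow two_ne_zero])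
  have hg_lim : Tendsto (fun x : ℝ => g x / ((x - A) * f x)) atTop (𝓝 1) := by
    refine (by simpa [Pi.div_def] using
      hglim.div ((tendsto_ofReal_sub_div_atTop A).mul hflim) (by norm_num) :
        Tendsto (fun x : ℝ => g x / x / ((x - A) / x * f x)) atTop (𝓝 1)).congr' ?_
    filter_upwards [eventually_ne_atTop 0] with x hx
    have hx' : (x : ℂ) ≠ 0 := ofReal_ne_zero.mpr hx
    field_simp
  have hg_eq : EqOn g (fun x => ((x : ℂ) - A) * f x) (Ici 0) :=
    isPreconnected_Ici.eqOn_of_sq_eq_of_tendsto_div hg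
      ((continuous_ofReal.sub continuous_const).continuousOn.mul hf)
      (fun x hx => by
        simp only [Pi.pow_apply, mul_pow, hg2 x hx, hf2 x hx]
        rw [mul_sub, mul_one, mul_div_cancel₀ _ (pow_ne_zero 2 (hd x))])
      (fun x hx => mul_ne_zero (hd x) (hf_ne x hx)) (Ici_mem_atTop 0) hg_lim
  exact ⟨hf0, by simpa [hf0] using hg_eq self_mem_Ici⟩
end

section
/- Let A ∈ ℂ ∖ ℝ, n ∈ ℕ, and let Σ be a contour in ℂ ∖ [0,∞) given as the image of a piecewise-smooth curve t ↦ σ(t), t ∈ ℝ, with Re σ(t) → +∞ and |Im σ(t)| bounded as t → ±∞, passing around the origin (i.e., winding so that Σ together with [0,∞) encircles 0). Then for every k with 0 ≤ k ≤ n−1, ∫_Σ z^k L_n^{(α)}(z) z^α e^{−z} dz = 0, where z^α = exp(α log z) with arg z ∈ [0, 2π). -/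
/-!
With `S_β P = z P' + (β - z) P` one has `(P(z) z^β e^{-z})' = (S_β P)(z) z^{β-1} e^{-z}`, so it
suffices to write `z^{k+1} L_n^{(α)}` as `S_α P` for a polynomial `P`: then `P(z) z^α e^{-z}` is a
primitive of the integrand, and it tends to `0` at both ends of the contour, which run to `+∞`
inside a horizontal strip where `e^{-z}` beats every power of `z`.

The Rodrigues formula, one derivative at a time, reads `(n+1) L_{n+1}^{(α)} = S_{α+1} L_n^{(α+1)}`.
Together with `z S_{β+1} = S_β z` and `z^j S_β Q = S_β (z^j Q) - j z^j Q` (integration by parts)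
this puts `z^{k+1} L_n^{(α)}` in the range of `S_α` by induction on `k < n`.
-/

open Finset

/-- Generalized Laguerre polynomial `L_n^{(α)}(z) = ∑_{k=0}^n C(n+α, n-k) (-z)^k / k!`,
where `C(n+α, m) = (n+α)(n+α-1)⋯(n+α-m+1)/m!` is the generalized binomial coefficient. -/
noncomputable def laguerre (n : ℕ) (α : ℂ) : Polynomial ℂ :=
  ∑ k ∈ Finset.range (n + 1),
    Polynomial.C ((∏ j ∈ Finset.range (n - k), ((n : ℂ) + α - j)) /
      (Nat.factorial (n - k) : ℂ) / (Nat.factorial k : ℂ)) * (-Polynomial.X) ^ k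


open Filter MeasureTheory

/-- Branch of `log` with cut along `[0,∞)`, i.e. `arg z ∈ (0, 2π)` off the cut. -/
noncomputable def logCut (z : ℂ) : ℂ := Complex.log (-z) + Real.pi * Complex.I

/-- `z^α = exp(α log z)` with `arg z ∈ [0, 2π)`. -/
noncomputable def cpowCut (β z : ℂ) : ℂ := Complex.exp (β * logCut z)

open Polynomial
open scoped Nat

section WeightDeriv

variable {R : Type*} [CommRing R]

/-- The operator `S_β`: `(P(z) z^β e^{-z})' = (S_β P)(z) z^{β-1} e^{-z}`. -/
noncomputable def weightDeriv (β : R) : R[X] →ₗ[R] R[X] :=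
  LinearMap.mulLeft R X ∘ₗ derivative + LinearMap.mulLeft R (C β - X)

theorem weightDeriv_apply (β : R) (P : R[X]) :
    weightDeriv β P = X * derivative P + (C β - X) * P := rfl

theorem weightDeriv_mul (β : R) (f P : R[X]) :
    weightDeriv β (f * P) = f * weightDeriv β P + X * derivative f * P := by
  simp only [weightDeriv_apply, derivative_mul]
  ring

theorem weightDeriv_add_one (β : R) (P : R[X]) :
    weightDeriv (β + 1) P = weightDeriv β P + P := by
  simp only [weightDeriv_apply, C_add, C_1]
  ring

theorem X_mul_weightDeriv_add_one (β : R) (P : R[X]) :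
    X * weightDeriv (β + 1) P = weightDeriv β (X * P) := by
  rw [weightDeriv_mul, weightDeriv_add_one, derivative_X]
  ring

theorem X_pow_mul_weightDeriv (β : R) (P : R[X]) (j : ℕ) :
    X ^ j * weightDeriv β P = weightDeriv β (X ^ j * P) - (j : R) • (X ^ j * P) := by
  rw [weightDeriv_mul, derivative_X_pow, smul_eq_C_mul]
  rcases j with _ | j
  · simp
  · rw [Nat.add_sub_cancel, pow_succ]
    ring

theorem coeff_weightDeriv_zero (β : R) (P : R[X]) :
    (weightDeriv β P).coeff 0 = β * P.coeff 0 := by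
  simp [weightDeriv_apply, sub_mul]

theorem coeff_weightDeriv_succ (β : R) (P : R[X]) (j : ℕ) :
    (weightDeriv β P).coeff (j + 1) = (j + 1 + β) * P.coeff (j + 1) - P.coeff j := by
  simp only [weightDeriv_apply, coeff_add, coeff_X_mul, coeff_derivative, sub_mul, coeff_sub,
    coeff_C_mul]
  ring

end WeightDeriv

theorem natDegree_laguerre_le (n : ℕ) (α : ℂ) : (laguerre n α).natDegree ≤ n := by
  refine natDegree_sum_le_of_forall_le _ _ fun i hi => (natDegree_C_mul_le _ _).trans ?_
  rw [natDegree_pow, natDegree_neg, natDegree_X, mul_one]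
  exact Nat.lt_succ_iff.mp (mem_range.mp hi)

theorem coeff_laguerre {n m : ℕ} (hm : m ≤ n) (α : ℂ) :
    (laguerre n α).coeff m =
      (-1) ^ m * (∏ j ∈ range (n - m), ((n : ℂ) + α - j)) / ((n - m)! * m !) := by
  have hterm : ∀ (c : ℂ) (b : ℕ),
      (C c * (-X) ^ b).coeff m = if m = b then c * (-1) ^ m else 0 := by
    intro c b
    rw [neg_pow, coeff_C_mul, ← C_1, ← C_neg, ← C_pow, coeff_C_mul_X_pow]
    split_ifs <;> simp [*]
  simp only [laguerre, finsetSum_coeff, hterm]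
  rw [sum_ite_eq (range (n + 1)) m, if_pos (mem_range.mpr (Nat.lt_succ_of_le hm))]
  field_simp

theorem weightDeriv_laguerre (n : ℕ) (α : ℂ) :
    weightDeriv (α + 1) (laguerre n (α + 1)) = (n + 1 : ℂ) • laguerre (n + 1) α := by
  have hN : (n : ℂ) + (α + 1) = ((n + 1 : ℕ) : ℂ) + α := by push_cast; ring
  ext (_ | j)
  · rw [coeff_weightDeriv_zero, coeff_smul, smul_eq_mul, coeff_laguerre (Nat.zero_le _),
      coeff_laguerre (Nat.zero_le _), hN, Nat.sub_zero, Nat.sub_zero, prod_range_succ,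
      Nat.factorial_succ]
    have := Nat.cast_add_one_ne_zero (R := ℂ) n
    push_cast
    field_simp
    ring
  rw [coeff_weightDeriv_succ, coeff_smul, smul_eq_mul]
  rcases lt_trichotomy j n with hj | rfl | hj
  · obtain ⟨d, rfl⟩ := Nat.exists_eq_add_of_lt hj
    rw [coeff_laguerre hj, coeff_laguerre hj.le, coeff_laguerre (by omega), hN,
      show j + d + 1 - j = d + 1 by omega, show j + d + 1 - (j + 1) = d by omega,
      show j + d + 1 + 1 - (j + 1) = d + 1 by omega, prod_range_succ, Nat.factorial_succ,
      Nat.factorial_succ d]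
    have := Nat.cast_add_one_ne_zero (R := ℂ) j
    have := Nat.cast_add_one_ne_zero (R := ℂ) d
    push_cast
    rw [pow_succ]
    field_simp
    ring
  · rw [coeff_eq_zero_of_natDegree_lt ((natDegree_laguerre_le _ _).trans_lt j.lt_succ_self),
      coeff_laguerre le_rfl, coeff_laguerre le_rfl, Nat.sub_self, Nat.sub_self, Nat.factorial_succ]
    have := Nat.cast_add_one_ne_zero (R := ℂ) j
    push_cast
    field_simp
    ring
  · rw [coeff_eq_zero_of_natDegree_lt ((natDegree_laguerre_le _ _).trans_lt (by omega)),
      coeff_eq_zero_of_natDegree_lt ((natDegree_laguerre_le _ _).trans_lt hj),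
      coeff_eq_zero_of_natDegree_lt ((natDegree_laguerre_le _ _).trans_lt (by omega))]
    ring

theorem X_pow_succ_mul_laguerre_succ (k m : ℕ) (α : ℂ) :
    X ^ (k + 1) * laguerre (m + 1) α =
      (m + 1 : ℂ)⁻¹ • (X ^ k * weightDeriv α (X * laguerre m (α + 1))) := by
  rw [← X_mul_weightDeriv_add_one, weightDeriv_laguerre, mul_smul_comm, mul_smul_comm, smul_smul,
    inv_mul_cancel₀ (Nat.cast_add_one_ne_zero m), one_smul, ← mul_assoc, ← pow_succ]

theorem X_pow_succ_mul_laguerre_mem_range {k n : ℕ} (hk : k < n) (α : ℂ) :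
    X ^ (k + 1) * laguerre n α ∈ LinearMap.range (weightDeriv α) := by
  induction k generalizing n α with
  | zero =>
    obtain ⟨m, rfl⟩ : ∃ m, n = m + 1 := ⟨n - 1, by omega⟩
    rw [X_pow_succ_mul_laguerre_succ, pow_zero, one_mul, ← map_smul]
    exact LinearMap.mem_range_self _ _
  | succ j ih =>
    obtain ⟨m, rfl⟩ : ∃ m, n = m + 1 := ⟨n - 1, by omega⟩
    obtain ⟨P, hP⟩ := ih (n := m) (by omega) (α + 1)
    have hXP : X ^ (j + 1) * (X * laguerre m (α + 1)) = weightDeriv α (X * P) := by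
      rw [← X_mul_weightDeriv_add_one, hP, mul_left_comm]
    rw [X_pow_succ_mul_laguerre_succ, X_pow_mul_weightDeriv, hXP]
    exact Submodule.smul_mem _ _ (Submodule.sub_mem _ (LinearMap.mem_range_self _ _)
      (Submodule.smul_mem _ _ (LinearMap.mem_range_self _ _)))

open Complex Topology

theorem neg_mem_slitPlane_iff {z : ℂ} : -z ∈ slitPlane ↔ ¬(z.im = 0 ∧ 0 ≤ z.re) := by
  rw [mem_slitPlane_iff, neg_re, neg_im, neg_pos, neg_ne_zero, not_and_or, not_le, or_comm]

theorem re_logCut (z : ℂ) : (logCut z).re = Real.log ‖z‖ := by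
  simp [logCut, log_re]

theorem im_logCut_mem_Icc (z : ℂ) : (logCut z).im ∈ Set.Icc 0 (2 * Real.pi) := by
  have h := neg_pi_lt_arg (-z)
  have h' := arg_le_pi (-z)
  simp only [logCut, add_im, log_im, mul_im, ofReal_re, ofReal_im, I_re, I_im]
  constructor <;> linarith

theorem hasDerivAt_logCut {z : ℂ} (hz : -z ∈ slitPlane) : HasDerivAt logCut z⁻¹ z := by
  have h := ((hasDerivAt_log hz).comp z (hasDerivAt_neg z)).add_const (Real.pi * I : ℂ)
  rwa [inv_neg, neg_mul_neg, mul_one] at h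

theorem hasDerivAt_cpowCut (β : ℂ) {z : ℂ} (hz : -z ∈ slitPlane) :
    HasDerivAt (cpowCut β) (cpowCut β z * (β * z⁻¹)) z :=
  ((hasDerivAt_logCut hz).const_mul β).cexp

theorem norm_cpowCut_le (β : ℂ) {z : ℂ} (hz : z ≠ 0) :
    ‖cpowCut β z‖ ≤ ‖z‖ ^ β.re * Real.exp (2 * Real.pi * |β.im|) := by
  obtain ⟨him₀, him₁⟩ := im_logCut_mem_Icc z
  have hbound : -(β.im * (logCut z).im) ≤ 2 * Real.pi * |β.im| := by
    calc -(β.im * (logCut z).im) ≤ |β.im| * (logCut z).im := by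
          rw [← neg_mul]; exact mul_le_mul_of_nonneg_right (neg_le_abs _) him₀
      _ ≤ 2 * Real.pi * |β.im| := by
          rw [mul_comm]; exact mul_le_mul_of_nonneg_right him₁ (abs_nonneg _)
  rw [cpowCut, norm_exp, mul_re, re_logCut, Real.rpow_def_of_pos (norm_pos_iff.mpr hz),
    ← Real.exp_add, mul_comm (Real.log _)]
  exact Real.exp_le_exp.mpr (by linarith)

theorem Polynomial.norm_eval_le_of_one_le {R : Type*} [SeminormedRing R] [NormOneClass R]
    (P : R[X]) {z : R} (hz : 1 ≤ ‖z‖) :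
    ‖P.eval z‖ ≤ (∑ i ∈ range (P.natDegree + 1), ‖P.coeff i‖) * ‖z‖ ^ P.natDegree := by
  rw [eval_eq_sum_range, sum_mul]
  refine (norm_sum_le _ _).trans (sum_le_sum fun i hi => ?_)
  refine (norm_mul_le _ _).trans (mul_le_mul_of_nonneg_left ?_ (norm_nonneg _))
  exact (norm_pow_le _ _).trans (pow_le_pow_right₀ hz (Nat.lt_succ_iff.mp (mem_range.mp hi)))

theorem hasDerivAt_eval_mul_cpowCut_mul_exp {β : ℂ} {P Q : ℂ[X]} (hPQ : weightDeriv β P = X * Q)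
    {z : ℂ} (hz : -z ∈ slitPlane) :
    HasDerivAt (fun w => P.eval w * cpowCut β w * exp (-w)) (Q.eval z * cpowCut β z * exp (-z))
      z := by
  have hz₀ : z ≠ 0 := neg_ne_zero.mp (slitPlane_ne_zero hz)
  have heval := congrArg (eval z) hPQ
  simp only [weightDeriv_apply, eval_add, eval_mul, eval_sub, eval_X, eval_C] at heval
  refine (((P.hasDerivAt z).mul (hasDerivAt_cpowCut β hz)).mul
    (hasDerivAt_neg z).cexp).congr_deriv ?_
  simp only [Pi.mul_apply]
  field_simp
  linear_combination cpowCut β z * heval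

def rightHalfStrip (M : ℝ) : Filter ℂ := comap re atTop ⊓ 𝓟 {z | |z.im| ≤ M}

theorem tendsto_re_rightHalfStrip (M : ℝ) : Tendsto re (rightHalfStrip M) atTop :=
  tendsto_comap.mono_left inf_le_left

theorem eventually_abs_im_le_rightHalfStrip (M : ℝ) : ∀ᶠ z in rightHalfStrip M, |z.im| ≤ M :=
  mem_inf_of_right (mem_principal_self _)

theorem tendsto_rightHalfStrip {ι : Type*} {l : Filter ι} {f : ι → ℂ} {M : ℝ}
    (hre : Tendsto (fun t => (f t).re) l atTop) (him : ∀ t, |(f t).im| ≤ M) :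
    Tendsto f l (rightHalfStrip M) :=
  tendsto_inf.2 ⟨tendsto_comap_iff.2 hre, tendsto_principal.2 (.of_forall him)⟩

theorem tendsto_norm_pow_mul_exp_neg_re (N : ℕ) (M : ℝ) :
    Tendsto (fun z : ℂ => ‖z‖ ^ N * Real.exp (-z.re)) (rightHalfStrip M) (𝓝 0) := by
  have hre := tendsto_re_rightHalfStrip M
  have hlim : Tendsto (fun z : ℂ => Real.exp M * ((z.re + M) ^ N * Real.exp (-(z.re + M))))
      (rightHalfStrip M) (𝓝 0) := by
    simpa using ((Real.tendsto_pow_mul_exp_neg_atTop_nhds_zero N).comp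
      (tendsto_atTop_add_const_right _ M hre)).const_mul (Real.exp M)
  refine squeeze_zero' (.of_forall fun z => by positivity) ?_ hlim
  filter_upwards [hre.eventually_ge_atTop 0, eventually_abs_im_le_rightHalfStrip M] with z hz hM
  have hnorm : ‖z‖ ≤ z.re + M :=
    (norm_le_abs_re_add_abs_im z).trans (by rw [abs_of_nonneg hz]; linarith)
  calc ‖z‖ ^ N * Real.exp (-z.re) ≤ (z.re + M) ^ N * Real.exp (-z.re) := by gcongr
    _ = Real.exp M * ((z.re + M) ^ N * Real.exp (-(z.re + M))) := by
      rw [mul_left_comm, ← Real.exp_add]; ring_nf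

theorem tendsto_eval_mul_cpowCut_mul_exp (P : ℂ[X]) (β : ℂ) (M : ℝ) :
    Tendsto (fun z => P.eval z * cpowCut β z * exp (-z)) (rightHalfStrip M) (𝓝 0) := by
  set C := (∑ i ∈ range (P.natDegree + 1), ‖P.coeff i‖) * Real.exp (2 * Real.pi * |β.im|)
  have hlim := (tendsto_norm_pow_mul_exp_neg_re (P.natDegree + ⌈β.re⌉₊) M).const_mul C
  rw [mul_zero] at hlim
  refine squeeze_zero_norm' ?_ hlim
  filter_upwards [(tendsto_re_rightHalfStrip M).eventually_ge_atTop 1] with z hre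
  have hz : 1 ≤ ‖z‖ := hre.trans (re_le_norm z)
  have hpow : ‖z‖ ^ β.re ≤ ‖z‖ ^ ⌈β.re⌉₊ := by
    rw [← Real.rpow_natCast]; exact Real.rpow_le_rpow_of_exponent_le hz (Nat.le_ceil _)
  calc ‖P.eval z * cpowCut β z * exp (-z)‖
      ≤ ((∑ i ∈ range (P.natDegree + 1), ‖P.coeff i‖) * ‖z‖ ^ P.natDegree) *
          (‖z‖ ^ β.re * Real.exp (2 * Real.pi * |β.im|)) * Real.exp (-z.re) := by
        rw [norm_mul, norm_mul, norm_exp, neg_re]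
        gcongr
        · exact P.norm_eval_le_of_one_le hz
        · exact norm_cpowCut_le β (norm_pos_iff.mp (one_pos.trans_le hz))
    _ = C * (‖z‖ ^ P.natDegree * ‖z‖ ^ β.re * Real.exp (-z.re)) := by ring
    _ ≤ C * (‖z‖ ^ (P.natDegree + ⌈β.re⌉₊) * Real.exp (-z.re)) := by rw [pow_add]; gcongr

theorem laguerre_orthogonality_general (α : ℂ) (n k : ℕ) (hk : k < n)
    (σ : ℝ → ℂ) (hσ : ContDiff ℝ 1 σ)
    (hcut : ∀ t : ℝ, ¬((σ t).im = 0 ∧ 0 ≤ (σ t).re))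
    (hre₁ : Tendsto (fun t => (σ t).re) atTop atTop)
    (hre₂ : Tendsto (fun t => (σ t).re) atBot atTop)
    (him : ∃ M : ℝ, ∀ t : ℝ, |(σ t).im| ≤ M) :
    ∫ t : ℝ, (σ t) ^ k * (laguerre n α).eval (σ t) * cpowCut α (σ t) *
      Complex.exp (-(σ t)) * deriv σ t = 0 := by
  obtain ⟨P, hP⟩ := X_pow_succ_mul_laguerre_mem_range hk α
  rw [pow_succ', mul_assoc] at hP
  obtain ⟨M, hM⟩ := him
  set F : ℂ → ℂ := fun z => P.eval z * cpowCut α z * exp (-z)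
  have hderiv : ∀ t, HasDerivAt (F ∘ σ) ((σ t) ^ k * (laguerre n α).eval (σ t) *
      cpowCut α (σ t) * exp (-(σ t)) * deriv σ t) t := fun t => by
    simpa using (hasDerivAt_eval_mul_cpowCut_mul_exp hP (neg_mem_slitPlane_iff.2 (hcut t))).comp t
      ((hσ.differentiable one_ne_zero) t).hasDerivAt
  have hlim : ∀ l : Filter ℝ, Tendsto (fun t => (σ t).re) l atTop → Tendsto (F ∘ σ) l (𝓝 0) :=
    fun l hl => (tendsto_eval_mul_cpowCut_mul_exp P α M).comp (tendsto_rightHalfStrip hl hM)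
  -- A non-integrable integrand has Bochner integral `0` by convention.
  by_cases hint : Integrable fun t => (σ t) ^ k * (laguerre n α).eval (σ t) *
      cpowCut α (σ t) * exp (-(σ t)) * deriv σ t
  · simpa using integral_of_hasDerivAt_of_tendsto hderiv hint (hlim atBot hre₂) (hlim atTop hre₁)
  · exact integral_undef hint

/-- Orthogonality of the generalized Laguerre polynomials with non-real parameter `α`
along a contour `σ` in `ℂ ∖ [0,∞)` whose both ends go to `+∞` with bounded imaginary
part, passing around the origin: `∫_Σ z^k L_n^{(α)}(z) z^α e^{−z} dz = 0` for `k < n`. -/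
theorem laguerre_orthogonality (α : ℂ) (hα : α.im ≠ 0) (n k : ℕ) (hk : k < n)
    (σ : ℝ → ℂ) (hσ : ContDiff ℝ 1 σ)
    (hcut : ∀ t : ℝ, ¬((σ t).im = 0 ∧ 0 ≤ (σ t).re))
    (hre₁ : Tendsto (fun t => (σ t).re) atTop atTop)
    (hre₂ : Tendsto (fun t => (σ t).re) atBot atTop)
    (him : ∃ M : ℝ, ∀ t : ℝ, |(σ t).im| ≤ M)
    (hwind : ∃ T : ℝ, (∀ t ≥ T, 0 < (σ t).im) ∧ (∀ t ≤ -T, (σ t).im < 0)) :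
    ∫ t : ℝ, (σ t) ^ k * (laguerre n α).eval (σ t) * cpowCut α (σ t) *
      Complex.exp (-(σ t)) * deriv σ t = 0 :=
  laguerre_orthogonality_general α n k hk σ hσ hcut hre₁ hre₂ him
end
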